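/- If (A, ⋄, σ, h) is a Euclidean quasicomposition algebra, then its triple T(A) = A×A×A with product * and metric H = h×h×h satisfies the radial Hsiang identity H(x*x, (x*x)*x) = (4/3)·H(x,x)·H(x*x, x) for all x ∈ T(A). Conversely, if T(A) satisfies this identity then (A, ⋄, σ, h) is a quasicomposition algebra. -/
import Mathlib


/-- The triple product on `T(A) = A × A × A` of an algebra with involution `(A, ⋄, σ)`. -/
def tripleMul {A : Type*} [AddCommGroup A] [Module ℝ A]
    (mul : A →ₗ[ℝ] A →ₗ[ℝ] A) (σ : A →ₗ[ℝ] A) (x y : A × A × A) : A × A × A :=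
  (mul (σ x.2.2) (σ y.2.1) + mul (σ y.2.2) (σ x.2.1),
   mul (σ x.1) (σ y.2.2) + mul (σ y.1) (σ x.2.2),
   mul (σ x.2.1) (σ y.1) + mul (σ y.2.1) (σ x.1))

/-- The product metric `H = h × h × h` on `T(A)`. -/
def tripleH {A : Type*} [AddCommGroup A] [Module ℝ A]
    (h : A →ₗ[ℝ] A →ₗ[ℝ] ℝ) (x y : A × A × A) : ℝ :=
  h x.1 y.1 + h x.2.1 y.2.1 + h x.2.2 y.2.2

/-- `(A, ⋄, σ, h)` is a Euclidean quasicomposition algebra if and only if its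
triple `T(A)` with product `*` and metric `H = h × h × h` satisfies the radial Hsiang identity
`H(x*x, (x*x)*x) = (4/3)·H(x,x)·H(x*x, x)` for all `x ∈ T(A)`. -/
theorem triple_hsiang_iff_quasicomposition
    {A : Type*} [AddCommGroup A] [Module ℝ A] [FiniteDimensional ℝ A]
    (mul : A →ₗ[ℝ] A →ₗ[ℝ] A)
    (σ : A →ₗ[ℝ] A)
    (hσinv : ∀ x : A, σ (σ x) = x)
    (hσmul : ∀ x y : A, σ (mul x y) = mul (σ y) (σ x))
    (h : A →ₗ[ℝ] A →ₗ[ℝ] ℝ)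
    (hsymm : ∀ x y : A, h x y = h y x)
    (hpos : ∀ x : A, x ≠ 0 → 0 < h x x)
    (hσorth : ∀ x y : A, h (σ x) (σ y) = h x y)
    (hinv : ∀ x y z : A, h (mul x y) z = h x (mul z (σ y))) :
    (∀ x y : A, mul x (mul (σ x) (mul x y)) = h x x • mul x y) ↔
    (∀ x : A × A × A,
      tripleH h (tripleMul mul σ x x) (tripleMul mul σ (tripleMul mul σ x x) x)
        = (4 / 3) * tripleH h x x * tripleH h (tripleMul mul σ x x) x) := by
  have hswap : ∀ x y : A, h (σ x) y = h x (σ y) := by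
    intro x y
    have := hσorth x (σ y)
    rwa [hσinv] at this
  have hL : ∀ p q s : A, h (mul (σ p) q) s = h q (mul p s) := by
    intro p q s
    calc h (mul (σ p) q) s = h (σ (mul (σ p) q)) (σ s) := (hσorth _ _).symm
      _ = h (mul (σ q) p) (σ s) := by rw [hσmul, hσinv]
      _ = h (σ q) (mul (σ s) (σ p)) := by rw [hinv]
      _ = h (σ q) (σ (mul p s)) := by rw [hσmul]
      _ = h q (mul p s) := hσorth _ _
  have e1 : ∀ a b c : A, h (mul (σ c) (σ b)) (mul (mul a b) (σ b))
      = h (σ a) (mul b (mul (σ b) (mul b c))) := by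
    intro a b c
    calc h (mul (σ c) (σ b)) (mul (mul a b) (σ b))
        = h (mul (mul a b) (σ b)) (mul (σ c) (σ b)) := hsymm _ _
      _ = h (mul a b) (mul (mul (σ c) (σ b)) b) := by rw [hinv, hσinv]
      _ = h (mul (mul (σ c) (σ b)) b) (mul a b) := hsymm _ _
      _ = h (mul (mul (mul (σ c) (σ b)) b) (σ b)) a := by
            conv_rhs => rw [hinv, hσinv]
      _ = h (σ (mul b (mul (σ b) (mul b c)))) a := by
            rw [hσmul, hσmul, hσmul, hσinv]
      _ = h (mul b (mul (σ b) (mul b c))) (σ a) := hswap _ _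
      _ = h (σ a) (mul b (mul (σ b) (mul b c))) := hsymm _ _
  have t1 : ∀ a b c : A, h (mul (σ c) (σ b)) a = h (σ c) (mul a b) := by
    intro a b c; rw [hinv, hσinv]
  have tc : ∀ a b c : A, h (σ c) (mul a b) = h (σ b) (mul c a) := by
    intro a b c
    calc h (σ c) (mul a b) = h c (σ (mul a b)) := hswap _ _
      _ = h c (mul (σ b) (σ a)) := by rw [hσmul]
      _ = h (mul (σ b) (σ a)) c := hsymm _ _
      _ = h (σ b) (mul c a) := by rw [hinv, hσinv]
  have key : ∀ a b c : A,
      tripleH h (tripleMul mul σ (a,b,c) (a,b,c))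
          (tripleMul mul σ (tripleMul mul σ (a,b,c) (a,b,c)) (a,b,c))
        - 4 / 3 * tripleH h (a,b,c) (a,b,c) * tripleH h (tripleMul mul σ (a,b,c) (a,b,c)) (a,b,c)
      = 8 * (h (σ c) (mul a (mul (σ a) (mul a b)) - h a a • mul a b)
           + h (σ b) (mul c (mul (σ c) (mul c a)) - h c c • mul c a)
           + h (σ a) (mul b (mul (σ b) (mul b c)) - h b b • mul b c)) := by
    intro a b c
    simp only [tripleMul, tripleH, map_add, LinearMap.add_apply, map_sub, LinearMap.sub_apply,
      map_smul, LinearMap.smul_apply, smul_eq_mul, hσmul, hσinv]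
    simp only [e1 a b c, e1 b c a, e1 c a b,
      hL c (σ b) (mul (σ c) (mul c a)), hL a (σ c) (mul (σ a) (mul a b)),
      hL b (σ a) (mul (σ b) (mul b c)),
      t1 a b c, t1 b c a, t1 c a b, tc b c a, (tc a b c).symm]
    ring
  constructor
  · intro hq x
    obtain ⟨a, b, c⟩ := x
    have k := key a b c
    rw [hq a b, hq c a, hq b c, sub_self, sub_self, sub_self, map_zero, map_zero, map_zero] at k
    linarith
  · intro hT
    have G : ∀ a b c : A,
        h (σ c) (mul a (mul (σ a) (mul a b)) - h a a • mul a b)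
        + h (σ b) (mul c (mul (σ c) (mul c a)) - h c c • mul c a)
        + h (σ a) (mul b (mul (σ b) (mul b c)) - h b b • mul b c) = 0 := by
      intro a b c
      have k := key a b c
      have ht := hT (a, b, c)
      linarith
    have isol : ∀ a b c : A,
        h (σ c) (mul a (mul (σ a) (mul a b)) - h a a • mul a b) = 0 := by
      intro a b c
      have g1 := G a b c
      have g2 := G ((2:ℝ) • a) b c
      simp only [map_sub, map_smul, LinearMap.smul_apply, smul_eq_mul, smul_smul] at g1 g2 ⊢
      ring_nf at g1 g2 ⊢
      linarith
    intro x y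
    have hz := isol x y (σ (mul x (mul (σ x) (mul x y)) - h x x • mul x y))
    rw [hσinv] at hz
    have hd : mul x (mul (σ x) (mul x y)) - h x x • mul x y = 0 := by
      by_contra hne
      exact absurd hz (ne_of_gt (hpos _ hne))
    exact sub_eq_zero.mp hd
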